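/- The replicator dynamics satisfy positive correlation: for every mixed strategy profile x in the product of simplices and every player i, ⟨f_i(x), v_i(x)⟩ ≥ 0, with equality if and only if f_i(x) = 0 (i.e., for each j, either x_{ij} = 0 or u_i(e_{ij}, x_{-i}) = u_i(x)). -/
import Mathlib


open Finset

/-- Multilinear mixed extension of a pure payoff function. -/
noncomputable def mixedPayoff {N : ℕ} {n : Fin N → ℕ}
    (u : (∀ i, Fin (n i)) → ℝ) (x : ∀ i, Fin (n i) → ℝ) : ℝ :=
  ∑ s : ∀ i, Fin (n i), (∏ k, x k (s k)) * u s

/-- Instantaneous payoff `v i j x = u_i(e_{ij}, x_{-i})`. -/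
noncomputable def instPayoff {N : ℕ} {n : Fin N → ℕ}
    (u : Fin N → (∀ i, Fin (n i)) → ℝ) (x : ∀ i, Fin (n i) → ℝ)
    (i : Fin N) (j : Fin (n i)) : ℝ :=
  mixedPayoff (u i) (Function.update x i (fun j' => if j' = j then (1 : ℝ) else 0))

/-- Replicator dynamics update policy. -/
noncomputable def replicator {N : ℕ} {n : Fin N → ℕ}
    (u : Fin N → (∀ i, Fin (n i)) → ℝ) (x : ∀ i, Fin (n i) → ℝ)
    (i : Fin N) (j : Fin (n i)) : ℝ :=
  x i j * (instPayoff u x i j - mixedPayoff (u i) x)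

/-- Membership in the probability simplex. -/
def inSimplex {m : ℕ} (y : Fin m → ℝ) : Prop :=
  (∀ j, 0 ≤ y j) ∧ ∑ j, y j = 1

lemma key_sum_instPayoff {N : ℕ} {n : Fin N → ℕ} (u : Fin N → (∀ i, Fin (n i)) → ℝ)
    (x : ∀ i, Fin (n i) → ℝ) (i : Fin N) :
    ∑ j, x i j * instPayoff u x i j = mixedPayoff (u i) x := by
  unfold instPayoff mixedPayoff
  simp only [Finset.mul_sum]
  rw [Finset.sum_comm]
  apply Finset.sum_congr rfl
  intro s _
  have hprod : ∀ j : Fin (n i),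
      (∏ k, Function.update x i (fun j' => if j' = j then (1 : ℝ) else 0) k (s k))
        = (if s i = j then (1:ℝ) else 0) * ∏ k ∈ {i}ᶜ, x k (s k) := by
    intro j
    rw [Fintype.prod_eq_mul_prod_compl i]
    congr 1
    · simp
    · exact Finset.prod_congr rfl fun k hk => by
        rw [Function.update_of_ne (show k ≠ i by simpa using hk)]
  simp only [hprod]
  rw [Fintype.prod_eq_mul_prod_compl i (fun k => x k (s k))]
  simp only [ite_mul, one_mul, zero_mul, mul_ite, mul_zero]
  rw [Finset.sum_ite_eq Finset.univ (s i)]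
  simp [mul_assoc]

/-- positive correlation of the replicator dynamics on the product of
simplices, with equality iff the update vector of player `i` vanishes. -/
theorem replicator_positiveCorrelation {N : ℕ} {n : Fin N → ℕ}
    (u : Fin N → (∀ i, Fin (n i)) → ℝ)
    (x : ∀ i, Fin (n i) → ℝ) (hx : ∀ k, inSimplex (x k)) (i : Fin N) :
    0 ≤ ∑ j, replicator u x i j * instPayoff u x i j ∧
    ((∑ j, replicator u x i j * instPayoff u x i j) = 0 ↔
      ∀ j, replicator u x i j = 0) := by

  set m := mixedPayoff (u i) x with hm
  set a := instPayoff u x i with ha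
  have hzero : ∑ j, x i j * (a j - m) * m = 0 := by
    rw [← Finset.sum_mul]
    have : ∑ j, x i j * (a j - m) = 0 := by
      have h1 : ∑ j, x i j * (a j - m) = (∑ j, x i j * a j) - m * ∑ j, x i j := by
        rw [Finset.mul_sum, ← Finset.sum_sub_distrib]
        exact Finset.sum_congr rfl fun j _ => by ring
      rw [h1, key_sum_instPayoff u x i, (hx i).2, mul_one, sub_self]
    rw [this, zero_mul]
  have hsq : ∑ j, replicator u x i j * a j = ∑ j, x i j * (a j - m) ^ 2 := by
    have : ∀ j, replicator u x i j * a j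
        = x i j * (a j - m) ^ 2 + x i j * (a j - m) * m := fun j => by
      simp only [replicator]; ring
    rw [Finset.sum_congr rfl fun j _ => this j, Finset.sum_add_distrib, hzero, add_zero]
  have hterm : ∀ j ∈ Finset.univ, (0:ℝ) ≤ x i j * (a j - m) ^ 2 := fun j _ =>
    mul_nonneg ((hx i).1 j) (sq_nonneg _)
  constructor
  · rw [hsq]; exact Finset.sum_nonneg hterm
  · rw [hsq]
    rw [Finset.sum_eq_zero_iff_of_nonneg hterm]
    constructor
    · intro h j
      have := h j (Finset.mem_univ j)
      rcases mul_eq_zero.mp this with h1 | h2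
      · simp [replicator, h1]
      · simp [replicator, ← hm, ← show a j = instPayoff u x i j from rfl,
          sub_eq_zero.mp (pow_eq_zero_iff (two_ne_zero) |>.mp h2)]
    · intro h j _
      have hj : x i j * (a j - m) = 0 := h j
      have : x i j * (a j - m) ^ 2 = (x i j * (a j - m)) * (a j - m) := by ring
      rw [this, hj, zero_mul]
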